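/- arXiv:2411.00343 — 4 statements merged into one kernel-verified Lean document; each statement's English description precedes it below -/
import Mathlib

section
/- For any graph G and any partition {V₁, V₂} of V(G), the graph G⁺ is contained in G[V₁]⁺ ⊠ G[V₂]⁺. -/
open SimpleGraph

/-- `H` is isomorphic to a subgraph of `G`. -/
def Contains {α β : Type} (H : SimpleGraph α) (G : SimpleGraph β) : Prop :=
  ∃ f : α ↪ β, ∀ ⦃u v⦄, H.Adj u v → G.Adj (f u) (f v)

/-- The strong product of two graphs. -/
def StrongProd {α β : Type} (G : SimpleGraph α) (H : SimpleGraph β) :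
    SimpleGraph (α × β) where
  Adj x y := x ≠ y ∧ (x.1 = y.1 ∨ G.Adj x.1 y.1) ∧ (x.2 = y.2 ∨ H.Adj x.2 y.2)
  symm := ⟨by
    rintro x y ⟨h1, h2, h3⟩
    exact ⟨h1.symm, h2.imp Eq.symm SimpleGraph.Adj.symm, h3.imp Eq.symm SimpleGraph.Adj.symm⟩⟩
  loopless := ⟨fun x h => h.1 rfl⟩

/-- `H` is a minor of `G`, witnessed by disjoint connected branch sets. -/
def IsMinorOf {α β : Type} (H : SimpleGraph α) (G : SimpleGraph β) : Prop :=
  ∃ B : α → Set β,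
    (∀ a, (G.induce (B a)).Connected) ∧
    (Pairwise fun a b => Disjoint (B a) (B b)) ∧
    (∀ ⦃a b⦄, H.Adj a b → ∃ x ∈ B a, ∃ y ∈ B b, G.Adj x y)

/-- A graph is planar iff it has no `K₅` minor and no `K₃,₃` minor (Wagner's theorem). -/
def IsPlanar {α : Type} (G : SimpleGraph α) : Prop :=
  ¬ IsMinorOf (completeGraph (Fin 5)) G ∧
  ¬ IsMinorOf (completeBipartiteGraph (Fin 3) (Fin 3)) G

/-- `G` has a tree-decomposition of width at most `k`. -/
def HasTreewidthLE {α : Type} (G : SimpleGraph α) (k : ℕ) : Prop :=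
  ∃ (ι : Type) (T : SimpleGraph ι) (B : ι → Set α),
    T.IsTree ∧
    (∀ ⦃u v⦄, G.Adj u v → ∃ i, u ∈ B i ∧ v ∈ B i) ∧
    (∀ v, (T.induce {i | v ∈ B i}).Connected) ∧
    (∀ i, (B i).Finite ∧ (B i).ncard ≤ k + 1)

/-- `G` has a path-decomposition of width at most `k`. -/
def HasPathwidthLE {α : Type} (G : SimpleGraph α) (k : ℕ) : Prop :=
  ∃ (m : ℕ) (B : Fin m → Set α),
    (∀ ⦃u v⦄, G.Adj u v → ∃ i, u ∈ B i ∧ v ∈ B i) ∧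
    (∀ v, ∃ i, v ∈ B i) ∧
    (∀ v (i j l : Fin m), i ≤ j → j ≤ l → v ∈ B i → v ∈ B l → v ∈ B j) ∧
    (∀ i, (B i).Finite ∧ (B i).ncard ≤ k + 1)

/-- The quotient of `G` by a family of sets of vertices: vertices are the members of `P`,
two parts being adjacent iff some pair of representatives is adjacent in `G`. -/
def QuotientGraph {α : Type} (G : SimpleGraph α) (P : Set (Set α)) :
    SimpleGraph P where
  Adj A B := A ≠ B ∧ ∃ a ∈ (A : Set α), ∃ b ∈ (B : Set α), G.Adj a b
  symm := ⟨by
    rintro A B ⟨h1, a, ha, b, hb, hab⟩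
    exact ⟨h1.symm, b, hb, a, ha, hab.symm⟩⟩
  loopless := ⟨fun A h => h.1 rfl⟩

/-- A partition of the vertices of `G` is a tree-partition if the quotient graph is
contained in a tree. -/
def IsTreePartition {α : Type} (G : SimpleGraph α) (P : Set (Set α)) : Prop :=
  Setoid.IsPartition P ∧
  ∃ (ι : Type) (T : SimpleGraph ι), T.IsTree ∧ Contains (QuotientGraph G P) T

/-- A matching: a set of edges of `G`, pairwise not sharing a vertex. -/
def IsMatchingSet {α : Type} (G : SimpleGraph α) (M : Set (Sym2 α)) : Prop :=
  M ⊆ G.edgeSet ∧ M.Pairwise fun e f => ∀ v, v ∈ e → v ∉ f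

/-- The parts obtained from a matching: matched pairs and singletons of unmatched vertices. -/
def matchingParts {α : Type} (M : Set (Sym2 α)) : Set (Set α) :=
  {S | (∃ e ∈ M, S = {x | x ∈ e}) ∨ ∃ v, (∀ e ∈ M, v ∉ e) ∧ S = {v}}

/-- The graph `G/M` obtained by contracting each edge of a matching `M`. -/
def ContractMatching {α : Type} (G : SimpleGraph α) (M : Set (Sym2 α)) :
    SimpleGraph (matchingParts M) :=
  QuotientGraph G (matchingParts M)

/-- A graph is a path graph if it is isomorphic to `pathGraph n` for some `n`. -/
def IsPathGraph {α : Type} (G : SimpleGraph α) : Prop :=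
  ∃ n : ℕ, Nonempty (G ≃g SimpleGraph.pathGraph n)

/-- A graph in which every cycle is a triangle. -/
def IsTriangleForest {α : Type} (G : SimpleGraph α) : Prop :=
  ∀ (v : α) (w : G.Walk v v), w.IsCycle → w.length = 3

/-- `G` is `k`-apex: removing at most `k` vertices leaves a planar graph. -/
def IsKApex {α : Type} (G : SimpleGraph α) (k : ℕ) : Prop :=
  ∃ A : Set α, A.ncard ≤ k ∧ IsPlanar (G.induce Aᶜ)

/-- `G` is an apex-forest: removing at most one vertex leaves a forest. -/
def IsApexForest {α : Type} (G : SimpleGraph α) : Prop :=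
  ∃ A : Set α, A.ncard ≤ 1 ∧ (G.induce Aᶜ).IsAcyclic

/-- `G⁺`: the graph `G` together with one new dominant vertex. -/
def AddDominant {α : Type} (G : SimpleGraph α) : SimpleGraph (Option α) where
  Adj x y := match x, y with
    | some a, some b => G.Adj a b
    | some _, none => True
    | none, some _ => True
    | none, none => False
  symm := ⟨by rintro (_|a) (_|b) h <;> simp_all [SimpleGraph.Adj.symm, adj_symm]⟩
  loopless := ⟨by rintro (_|a) h <;> simp_all⟩

/-- `G'` is a distension of `G`: for each edge `vw` of `G`, a non-empty path, complete
to `{v, w}`, is added, with the added paths disjoint from `G` and from each other. -/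
def IsDistension {α β : Type} (G : SimpleGraph α) (G' : SimpleGraph β) : Prop :=
  ∃ (g : α ↪ β) (f : β → Sym2 α),
    (∀ u v : α, G'.Adj (g u) (g v) ↔ G.Adj u v) ∧
    (∀ w : β, w ∉ Set.range g → f w ∈ G.edgeSet) ∧
    (∀ w : β, w ∉ Set.range g → ∀ v : α, (G'.Adj w (g v) ↔ v ∈ f w)) ∧
    (∀ w w' : β, w ∉ Set.range g → w' ∉ Set.range g → G'.Adj w w' → f w = f w') ∧
    (∀ e ∈ G.edgeSet, {w : β | w ∉ Set.range g ∧ f w = e}.Nonempty ∧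
      IsPathGraph (G'.induce {w : β | w ∉ Set.range g ∧ f w = e}))


/-!
Send a vertex `v ∈ V₁` to `(v, ∗)`, a vertex `v ∈ V₂` to `(∗, v)` and the apex of `G⁺` to `(∗, ∗)`,
where `∗` denotes the apices of `G[V₁]⁺` and `G[V₂]⁺`. In each coordinate, an edge of `G⁺` is then
mapped to an edge of `G[Vᵢ]⁺` or collapsed to a single vertex, because every endpoint that
leaves `Vᵢ` lands on the apex `∗`, which dominates `G[Vᵢ]⁺`. The map is injective since
`V₁ ∪ V₂` covers `V`, and an injective map with this property in both coordinates embeds `G⁺`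
into the strong product.
-/

theorem contains_strongProd_of_injective {α β γ : Type} {G₁ : SimpleGraph α}
    {G₂ : SimpleGraph β} {H : SimpleGraph γ} (f₁ : γ → α) (f₂ : γ → β)
    (hinj : Function.Injective fun x => (f₁ x, f₂ x))
    (h₁ : ∀ ⦃x y⦄, H.Adj x y → f₁ x = f₁ y ∨ G₁.Adj (f₁ x) (f₁ y))
    (h₂ : ∀ ⦃x y⦄, H.Adj x y → f₂ x = f₂ y ∨ G₂.Adj (f₂ x) (f₂ y)) :
    Contains H (StrongProd G₁ G₂) :=
  ⟨⟨_, hinj⟩, fun _ _ h => ⟨hinj.ne h.ne, h₁ h, h₂ h⟩⟩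

section AddDominant

variable {V : Type} (G : SimpleGraph V)

@[simp]
theorem addDominant_adj_none_some (v : V) : (AddDominant G).Adj none (some v) :=
  trivial

@[simp]
theorem addDominant_adj_some_none (v : V) : (AddDominant G).Adj (some v) none :=
  trivial

theorem eq_or_addDominant_adj_of_eq_none {x y : Option V} (h : x = none ∨ y = none) :
    x = y ∨ (AddDominant G).Adj x y := by
  rcases x with _ | u <;> rcases y with _ | v <;> simp_all

end AddDominant

section RestrictOption

variable {V : Type} (S : Set V) [DecidablePred (· ∈ S)]

def restrictOption : Option V → Option S
  | none => none
  | some v => if h : v ∈ S then some ⟨v, h⟩ else none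

variable {S}

theorem restrictOption_eq_some_iff {x : Option V} {w : S} :
    restrictOption S x = some w ↔ x = some w.1 := by
  rcases x with _ | v
  · simp [restrictOption]
  · by_cases hv : v ∈ S
    · simp [restrictOption, hv, Subtype.ext_iff, eq_comm]
    · simp only [restrictOption, hv, dite_false, reduceCtorEq, false_iff, Option.some.injEq]
      rintro rfl
      exact hv w.2

theorem restrictOption_some_of_mem {v : V} (hv : v ∈ S) :
    restrictOption S (some v) = some ⟨v, hv⟩ :=
  restrictOption_eq_some_iff.2 rfl

theorem restrictOption_some_of_notMem {v : V} (hv : v ∉ S) : restrictOption S (some v) = none :=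
  dif_neg hv

theorem eq_or_addDominant_induce_adj_restrictOption (G : SimpleGraph V) {x y : Option V}
    (h : (AddDominant G).Adj x y) :
    restrictOption S x = restrictOption S y ∨
      (AddDominant (G.induce S)).Adj (restrictOption S x) (restrictOption S y) := by
  rcases x with _ | u <;> rcases y with _ | v
  · exact absurd h id
  · exact eq_or_addDominant_adj_of_eq_none _ (.inl rfl)
  · exact eq_or_addDominant_adj_of_eq_none _ (.inr rfl)
  · by_cases hu : u ∈ S
    · by_cases hv : v ∈ S
      · rw [restrictOption_some_of_mem hu, restrictOption_some_of_mem hv]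
        exact .inr h
      · exact eq_or_addDominant_adj_of_eq_none _ (.inr (restrictOption_some_of_notMem hv))
    · exact eq_or_addDominant_adj_of_eq_none _ (.inl (restrictOption_some_of_notMem hu))

theorem injective_restrictOption_prod {V₁ V₂ : Set V} [DecidablePred (· ∈ V₁)]
    [DecidablePred (· ∈ V₂)] (hunion : V₁ ∪ V₂ = Set.univ) :
    Function.Injective fun x => (restrictOption V₁ x, restrictOption V₂ x) := by
  have key : ∀ {x y : Option V}, restrictOption V₁ x = restrictOption V₁ y →
      restrictOption V₂ x = restrictOption V₂ y → ∀ v, x = some v → y = some v := by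
    rintro x y h₁ h₂ v rfl
    rcases (hunion.symm ▸ Set.mem_univ v : v ∈ V₁ ∪ V₂) with hv | hv
    · exact restrictOption_eq_some_iff.1 (h₁ ▸ restrictOption_some_of_mem (S := V₁) hv)
    · exact restrictOption_eq_some_iff.1 (h₂ ▸ restrictOption_some_of_mem (S := V₂) hv)
  intro x y h
  obtain ⟨h₁, h₂⟩ := Prod.ext_iff.1 h
  exact Option.ext fun v => ⟨key h₁ h₂ v, key h₁.symm h₂.symm v⟩

end RestrictOption

theorem stmt2_general {V : Type} (G : SimpleGraph V) (V₁ V₂ : Set V)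
    (hunion : V₁ ∪ V₂ = Set.univ) :
    Contains (AddDominant G)
      (StrongProd (AddDominant (G.induce V₁)) (AddDominant (G.induce V₂))) := by
  classical
  exact contains_strongProd_of_injective (restrictOption V₁) (restrictOption V₂)
    (injective_restrictOption_prod hunion)
    (fun _ _ => eq_or_addDominant_induce_adj_restrictOption G)
    (fun _ _ => eq_or_addDominant_induce_adj_restrictOption G)

/-- For any graph `G` and any partition `{V₁, V₂}` of `V(G)`, the graph `G⁺` is contained
in `G[V₁]⁺ ⊠ G[V₂]⁺`. -/
theorem stmt2 {V : Type} [Fintype V] (G : SimpleGraph V) (V₁ V₂ : Set V)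
    (hdisj : Disjoint V₁ V₂) (hunion : V₁ ∪ V₂ = Set.univ) :
    Contains (AddDominant G)
      (StrongProd (AddDominant (G.induce V₁)) (AddDominant (G.induce V₂))) :=
  stmt2_general G V₁ V₂ hunion
end

section
/- If M is a matching in a graph G, then G is contained in (G/M) ⊠ K₂. -/
open SimpleGraph

/-!
Send `v` to the pair (part of `v` in `G/M`, label of `v`), where the label separates the two ends
of each matching edge: with the vertices ordered, a matched vertex gets `1` iff it is the larger
end of its edge. This is injective, since two vertices in one part are the ends of a matching
edge. An edge `uv` of `G` lands on an edge of the strong product: its parts coincide or are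
adjacent in `G/M` (witnessed by `u` and `v` themselves), and its labels coincide or are adjacent
in `K₂`.
-/

theorem contains_strongProd_quotientGraph_completeGraph {α β : Type} (G : SimpleGraph α)
    {P : Set (Set α)} (p : α → Set α) (hpP : ∀ v, p v ∈ P) (hp : ∀ v, v ∈ p v) (c : α → β)
    (hinj : Function.Injective fun v => (p v, c v)) :
    Contains G (StrongProd (QuotientGraph G P) (completeGraph β)) := by
  let f : α → P × β := fun v => (⟨p v, hpP v⟩, c v)
  have hf : Function.Injective f := fun u v h => by
    obtain ⟨hpart, hc⟩ := Prod.mk.inj h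
    exact hinj (Prod.ext (congrArg Subtype.val hpart) hc)
  refine ⟨⟨f, hf⟩, fun u v huv => ⟨hf.ne huv.ne, ?_, em _⟩⟩
  by_cases hpart : (f u).1 = (f v).1
  · exact Or.inl hpart
  · exact Or.inr ⟨hpart, u, hp u, v, hp v, huv⟩

section Matching

variable {α : Type} {M : Set (Sym2 α)} {u v w : α}

open Classical in
noncomputable def matchingPart (M : Set (Sym2 α)) (v : α) : Set α :=
  if h : ∃ e ∈ M, v ∈ e then {x | x ∈ h.choose} else {v}

lemma matchingPart_mem_matchingParts (M : Set (Sym2 α)) (v : α) :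
    matchingPart M v ∈ matchingParts M := by
  unfold matchingPart
  split_ifs with h
  · exact Or.inl ⟨h.choose, h.choose_spec.1, rfl⟩
  · exact Or.inr ⟨v, fun e he hv => h ⟨e, he, hv⟩, rfl⟩

lemma mem_matchingPart (M : Set (Sym2 α)) (v : α) : v ∈ matchingPart M v := by
  unfold matchingPart
  split_ifs with h
  · exact h.choose_spec.2
  · rfl

lemma mk_mem_of_mem_matchingPart (h : u ∈ matchingPart M v) (hne : u ≠ v) : s(u, v) ∈ M := by
  unfold matchingPart at h
  split_ifs at h with he
  · rw [← (Sym2.mem_and_mem_iff hne).mp ⟨h, he.choose_spec.2⟩]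
    exact he.choose_spec.1
  · exact absurd h hne

lemma eq_of_mk_mem_of_mk_mem (hM : M.Pairwise fun e f => ∀ x, x ∈ e → x ∉ f)
    (hv : s(u, v) ∈ M) (hw : s(u, w) ∈ M) : w = v := by
  by_contra hne
  have hvw : s(u, v) ≠ s(u, w) := fun h => hne (Sym2.congr_right.mp h).symm
  exact hM hv hw hvw u (Sym2.mem_mk_left u v) (Sym2.mem_mk_left u w)

open Classical in
noncomputable def matchingLabel [LinearOrder α] (M : Set (Sym2 α)) (v : α) : Fin 2 :=
  if ∃ w < v, s(v, w) ∈ M then 1 else 0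

lemma matchingLabel_ne [LinearOrder α] (hM : M.Pairwise fun e f => ∀ x, x ∈ e → x ∉ f)
    (huv : s(u, v) ∈ M) (hlt : u < v) : matchingLabel M u ≠ matchingLabel M v := by
  have hu : ¬ ∃ w < u, s(u, w) ∈ M := fun ⟨w, hwu, hw⟩ =>
    (eq_of_mk_mem_of_mk_mem hM huv hw ▸ hwu).not_gt hlt
  have hv : ∃ w < v, s(v, w) ∈ M := ⟨u, hlt, Sym2.eq_swap ▸ huv⟩
  simp only [matchingLabel, if_neg hu, if_pos hv]
  decide

lemma injective_matchingPart_matchingLabel [LinearOrder α]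
    (hM : M.Pairwise fun e f => ∀ x, x ∈ e → x ∉ f) :
    Function.Injective fun v => (matchingPart M v, matchingLabel M v) := by
  intro u v h
  obtain ⟨hpart, hlabel⟩ := Prod.mk.inj h
  by_contra hne
  have huv : s(u, v) ∈ M := mk_mem_of_mem_matchingPart (hpart ▸ mem_matchingPart M u) hne
  rcases lt_or_gt_of_ne hne with hlt | hgt
  · exact matchingLabel_ne hM huv hlt hlabel
  · exact matchingLabel_ne hM (Sym2.eq_swap ▸ huv) hgt hlabel.symm

end Matching

theorem stmt8_general {V : Type} (G : SimpleGraph V) (M : Set (Sym2 V))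
    (hM : IsMatchingSet G M) :
    Contains G (StrongProd (ContractMatching G M) (completeGraph (Fin 2))) := by
  let : LinearOrder V := IsWellOrder.linearOrder WellOrderingRel
  exact contains_strongProd_quotientGraph_completeGraph G (matchingPart M)
    (matchingPart_mem_matchingParts M) (mem_matchingPart M) (matchingLabel M)
    (injective_matchingPart_matchingLabel hM.2)

/-- If `M` is a matching in a graph `G`, then `G` is contained in `(G/M) ⊠ K₂`. -/
theorem stmt8 {V : Type} [Fintype V] (G : SimpleGraph V) (M : Set (Sym2 V))
    (hM : IsMatchingSet G M) :
    Contains G (StrongProd (ContractMatching G M) (completeGraph (Fin 2))) :=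
  stmt8_general G M hM
end

section
/- Let c be a positive integer, let F be a fan on at least c² + c + 1 vertices with centre v₁, and let 𝒫, 𝒬 be partitions of F such that 𝒫 is a tree-partition and |P ∩ Q| ≤ c for all P ∈ 𝒫 and Q ∈ 𝒬. Then there exists a vertex v₂ of F − v₁ whose part in 𝒬 differs from the part of 𝒬 containing v₁. -/
open SimpleGraph

/-!
If every vertex shared the `𝒬`-part of the centre `v₁`, then every part of `𝒫` would have at
most `c` vertices. Two adjacent path vertices outside the `𝒫`-part of `v₁` must lie in a common
part, since otherwise their parts and that of `v₁` would form a triangle in `F/𝒫`. The part of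
`v₁` contains at most `c - 1` path vertices, so among `c` disjoint runs of `c + 1` consecutive
path vertices one avoids it; that run then lies in a single part, which is too large.
-/

namespace Setoid.IsPartition

variable {α : Type*} {P : Set (Set α)}

noncomputable def part (hP : Setoid.IsPartition P) (v : α) : Set α :=
  (hP.2 v).exists.choose

lemma part_mem (hP : Setoid.IsPartition P) (v : α) : hP.part v ∈ P :=
  (hP.2 v).exists.choose_spec.1

lemma mem_part (hP : Setoid.IsPartition P) (v : α) : v ∈ hP.part v :=
  (hP.2 v).exists.choose_spec.2

end Setoid.IsPartition

lemma IsTreePartition.part_eq_of_triangle {α : Type} {G : SimpleGraph α} {P : Set (Set α)}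
    (hP : IsTreePartition G P) {a b w : α} (hab : G.Adj a b) (haw : G.Adj a w)
    (hbw : G.Adj b w) (ha : a ∉ hP.1.part w) (hb : b ∉ hP.1.part w) :
    hP.1.part a = hP.1.part b := by
  classical
  by_contra hne
  obtain ⟨hpart, ι, T, hT, f, hf⟩ := hP
  let toQuot (x : α) : P := ⟨hpart.part x, hpart.part_mem x⟩
  have quot_adj {x y : α} (hxy : G.Adj x y) (hne : hpart.part x ≠ hpart.part y) :
      T.Adj (f (toQuot x)) (f (toQuot y)) :=
    hf ⟨fun h => hne (congrArg Subtype.val h), x, hpart.mem_part x, y, hpart.mem_part y, hxy⟩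
  have haw' : hpart.part a ≠ hpart.part w := fun h => ha (h ▸ hpart.mem_part a)
  have hbw' : hpart.part b ≠ hpart.part w := fun h => hb (h ▸ hpart.mem_part b)
  exact hT.isAcyclic.cliqueFree le_rfl _ <| is3Clique_triple_iff.2
    ⟨quot_adj hab hne, quot_adj haw haw', quot_adj hbw hbw'⟩

lemma exists_block_notMem_of_card_lt {c : ℕ} (S : Finset ℕ) (hS : S.card < c) :
    ∃ k < c, ∀ m ≤ c, (c + 1) * k + m ∉ S := by
  have hcard : (S.image (· / (c + 1))).card < (Finset.range c).card :=
    (Finset.card_image_le).trans_lt (by simpa using hS)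
  obtain ⟨k, hk, hkS⟩ := Finset.exists_mem_notMem_of_card_lt_card hcard
  refine ⟨k, Finset.mem_range.1 hk, fun m hm hmS => hkS (Finset.mem_image.2 ⟨_, hmS, ?_⟩)⟩
  rw [Nat.mul_add_div (Nat.succ_pos c), Nat.div_eq_of_lt (Nat.lt_succ_of_le hm), add_zero]

lemma exists_seq_of_isPathGraph_induce_ne {V : Type} [Fintype V] {F : SimpleGraph V} {v₁ : V}
    (hpath : IsPathGraph (F.induce {w | w ≠ v₁})) :
    ∃ (n : ℕ) (u : ℕ → V), Fintype.card V = n + 1 ∧ Set.InjOn u (Set.Iio n) ∧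
      (∀ i < n, u i ≠ v₁) ∧ ∀ i, i + 1 < n → F.Adj (u i) (u (i + 1)) := by
  classical
  obtain ⟨n, ⟨e⟩⟩ := hpath
  refine ⟨n, fun i => if h : i < n then (e.symm ⟨i, h⟩ : V) else v₁, ?_, ?_, ?_, ?_⟩
  · have := Fintype.card_congr e.toEquiv
    simp only [ne_eq, Fintype.card_ofFinset, Set.mem_ofPred_eq, Fintype.card_fin,
      Finset.filter_ne', Finset.card_erase_of_mem (Finset.mem_univ _), Finset.card_univ] at this
    have := Fintype.card_pos_iff.2 ⟨v₁⟩
    omega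
  · intro i hi j hj h
    simp only [Set.mem_Iio] at hi hj
    simp only [dif_pos hi, dif_pos hj] at h
    exact Fin.ext_iff.1 (e.symm.injective (Subtype.val_injective h))
  · intro i hi
    simp only [dif_pos hi]
    exact (e.symm ⟨i, hi⟩).2
  · intro i hi
    have hpath_adj : (pathGraph n).Adj ⟨i, by omega⟩ ⟨i + 1, hi⟩ := pathGraph_adj.2 (Or.inl rfl)
    simpa [hi, Nat.lt_of_succ_lt hi] using e.symm.map_adj_iff.2 hpath_adj

section InjOnNat

variable {α : Type*} {u : ℕ → α} {n : ℕ} {s : Set α}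

lemma card_filter_mem_lt_ncard [DecidablePred (u · ∈ s)] (hinj : Set.InjOn u (Set.Iio n))
    {v : α} (hne : ∀ i < n, u i ≠ v) (hv : v ∈ s) (hs : s.Finite) :
    ((Finset.range n).filter (u · ∈ s)).card < s.ncard := by
  classical
  set S := (Finset.range n).filter (u · ∈ s)
  have hsub : (↑(insert v (S.image u)) : Set α) ⊆ s := by
    intro x hx
    simp only [Finset.coe_insert, Finset.coe_image, Set.mem_insert_iff, Set.mem_image,
      Finset.mem_coe, Finset.mem_filter, S] at hx
    rcases hx with rfl | ⟨i, ⟨-, hi⟩, rfl⟩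
    exacts [hv, hi]
  have hcard : (insert v (S.image u)).card = S.card + 1 := by
    rw [Finset.card_insert_of_notMem, Finset.card_image_of_injOn]
    · exact hinj.mono fun i hi => Finset.mem_range.1 (Finset.mem_filter.1 hi).1
    · simp only [Finset.mem_image, Finset.mem_filter, Finset.mem_range, S, not_exists, not_and]
      exact fun i hi => hne i hi.1
  calc S.card + 1 = (↑(insert v (S.image u)) : Set α).ncard := by
        rw [Set.ncard_coe_finset, hcard]
    _ ≤ s.ncard := Set.ncard_le_ncard hsub hs

lemma add_one_le_ncard_of_injOn (hinj : Set.InjOn u (Set.Iio n)) {b c : ℕ} (hb : b + c < n)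
    (hmem : ∀ m ≤ c, u (b + m) ∈ s) (hs : s.Finite) : c + 1 ≤ s.ncard := by
  have hrun := Set.ncard_le_ncard_of_injOn (s := ↑(Finset.range (c + 1))) (fun m => u (b + m))
    (fun m hm => hmem m (Nat.lt_succ_iff.1 (Finset.mem_range.1 hm)))
    (fun i hi j hj h => by
      simp only [Finset.coe_range, Set.mem_Iio] at hi hj
      have := hinj (Set.mem_Iio.2 (by omega)) (Set.mem_Iio.2 (by omega)) h
      omega) hs
  rwa [Set.ncard_coe_finset, Finset.card_range] at hrun

end InjOnNat

theorem card_le_of_isTreePartition_of_ncard_le {V : Type} [Fintype V] {F : SimpleGraph V}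
    {v₁ : V} (hdom : ∀ w, w ≠ v₁ → F.Adj v₁ w) (hpath : IsPathGraph (F.induce {w | w ≠ v₁}))
    {P : Set (Set V)} (hP : IsTreePartition F P) {c : ℕ} (hsmall : ∀ p ∈ P, p.ncard ≤ c) :
    Fintype.card V ≤ c ^ 2 + c := by
  classical
  obtain ⟨n, u, hn, hinj, hne, hadj⟩ := exists_seq_of_isPathGraph_induce_ne hpath
  set part := hP.1.part
  set S := (Finset.range n).filter (u · ∈ part v₁)
  have hS : S.card < c := (card_filter_mem_lt_ncard hinj hne (hP.1.mem_part v₁)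
    (Set.toFinite _)).trans_le (hsmall _ (hP.1.part_mem v₁))
  by_contra! hlarge
  obtain ⟨k, hk, hblock⟩ := exists_block_notMem_of_card_lt S hS
  set b := (c + 1) * k
  have hb : b + c < n := by simp only [b]; nlinarith [Nat.mul_le_mul_left (c + 1) hk]
  have hout (m : ℕ) (hm : m ≤ c) : u (b + m) ∉ part v₁ := fun h =>
    hblock m hm (Finset.mem_filter.2 ⟨Finset.mem_range.2 (by omega), h⟩)
  have hconst (m : ℕ) (hm : m ≤ c) : part (u (b + m)) = part (u b) := by
    induction m with
    | zero => rfl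
    | succ m ih =>
      rw [← ih (by omega)]
      exact (hP.part_eq_of_triangle (hadj _ (by omega)) (hdom _ (hne _ (by omega))).symm
        (hdom _ (hne _ (by omega))).symm (hout m (by omega)) (hout (m + 1) hm)).symm
  have hrun : c + 1 ≤ (part (u b)).ncard := add_one_le_ncard_of_injOn hinj hb
    (fun m hm => hconst m hm ▸ hP.1.mem_part _) (Set.toFinite _)
  have : (part (u b)).ncard ≤ c := hsmall _ (hP.1.part_mem (u b))
  omega

theorem stmt10_general {V : Type} [Fintype V] (c : ℕ)
    (F : SimpleGraph V) (hcard : c ^ 2 + c + 1 ≤ Fintype.card V)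
    (v₁ : V) (hdom : ∀ w, w ≠ v₁ → F.Adj v₁ w)
    (hpath : IsPathGraph (F.induce {w | w ≠ v₁}))
    (P Q : Set (Set V)) (hP : IsTreePartition F P) (hQ : Setoid.IsPartition Q)
    (hPQ : ∀ p ∈ P, ∀ q ∈ Q, (p ∩ q).ncard ≤ c) :
    ∃ v₂, v₂ ≠ v₁ ∧ ∀ q ∈ Q, v₁ ∈ q → v₂ ∉ q := by
  by_contra! hcon
  obtain ⟨q₀, ⟨hq₀, hv₁q₀⟩, huniq⟩ := hQ.2 v₁
  have hq₀_univ : q₀ = Set.univ := Set.eq_univ_of_forall fun v => by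
    rcases eq_or_ne v v₁ with rfl | hv
    · exact hv₁q₀
    · obtain ⟨q, hq, hv₁q, hvq⟩ := hcon v hv
      rwa [← huniq q ⟨hq, hv₁q⟩]
  have hsmall : ∀ p ∈ P, p.ncard ≤ c := fun p hp => by
    simpa [hq₀_univ] using hPQ p hp q₀ hq₀
  have := card_le_of_isTreePartition_of_ncard_le hdom hpath hP hsmall
  omega

/-- For a fan `F` on at least `c² + c + 1` vertices with centre `v₁`, and partitions
`𝒫, 𝒬` of `F` with `𝒫` a tree-partition and `|P ∩ Q| ≤ c` for all `P ∈ 𝒫`, `Q ∈ 𝒬`,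
there is a vertex `v₂ ≠ v₁` whose part in `𝒬` differs from that of `v₁`. -/
theorem stmt10 {V : Type} [Fintype V] (c : ℕ) (hc : 1 ≤ c)
    (F : SimpleGraph V) (hcard : c ^ 2 + c + 1 ≤ Fintype.card V)
    (v₁ : V) (hdom : ∀ w, w ≠ v₁ → F.Adj v₁ w)
    (hpath : IsPathGraph (F.induce {w | w ≠ v₁}))
    (P Q : Set (Set V)) (hP : IsTreePartition F P) (hQ : Setoid.IsPartition Q)
    (hPQ : ∀ p ∈ P, ∀ q ∈ Q, (p ∩ q).ncard ≤ c) :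
    ∃ v₂, v₂ ≠ v₁ ∧ ∀ q ∈ Q, v₁ ∈ q → v₂ ∉ q :=
  stmt10_general c F hcard v₁ hdom hpath P Q hP hQ hPQ
end

section
/- For any graph G and any distension Ĝ of G, tw(Ĝ) ≤ max{tw(G), 3}. -/
open SimpleGraph

/-!
Start from a tree-decomposition `(T, B)` of `G` of width `k`. For an edge `vw` with added path
`w₁ w₂ … wₘ`, choose a bag of `T` containing `v` and `w` and hang from it a path of new nodes
`t₁ t₂ … tₘ`, where `tⱼ` carries the bag `{wⱼ₋₁, wⱼ, v, w}` (just `{w₁, v, w}` for `j = 1`).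
The new tree is `T` with pendant paths attached, every new bag has at most four vertices, each
`wⱼ` occurs only at the adjacent nodes `tⱼ, tⱼ₊₁`, and the nodes whose bags contain an original
vertex `v` stay connected because each pendant path containing `v` hangs from a bag containing `v`.
-/

lemma IsPathGraph.of_iso {V W : Type} {H : SimpleGraph V} {H' : SimpleGraph W} (e : H ≃g H')
    (h : IsPathGraph H') : IsPathGraph H :=
  let ⟨n, ⟨φ⟩⟩ := h
  ⟨n, ⟨e.trans φ⟩⟩

lemma IsPathGraph.induce_induce {V : Type} {H : SimpleGraph V} {s t : Set V}
    (h : IsPathGraph (H.induce (s ∩ t))) : IsPathGraph ((H.induce s).induce {x | x.1 ∈ t}) :=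
  h.of_iso ⟨Equiv.subtypeSubtypeEquivSubtypeInter (· ∈ s) (· ∈ t), Iff.rfl⟩

lemma IsPathGraph.exists_index {V : Type} {H : SimpleGraph V} {s : Set V}
    (h : IsPathGraph (H.induce s)) :
    ∃ idx : V → ℕ, ∀ v ∈ s, ∀ w ∈ s,
      (H.Adj v w ↔ idx v + 1 = idx w ∨ idx w + 1 = idx v) ∧ (idx v = idx w → v = w) := by
  classical
  obtain ⟨n, ⟨φ⟩⟩ := h
  refine ⟨fun v => if hv : v ∈ s then φ ⟨v, hv⟩ else 0, fun v hv w hw => ?_⟩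
  simp only [dif_pos hv, dif_pos hw]
  refine ⟨(φ.map_adj_iff (v := ⟨v, hv⟩) (w := ⟨w, hw⟩)).symm.trans pathGraph_adj, fun hvw => ?_⟩
  exact congrArg Subtype.val (φ.injective (Fin.ext hvw))

lemma exists_index_of_forall_isPathGraph {V κ : Type} {H : SimpleGraph V} (c : V → κ)
    (h : ∀ v, IsPathGraph (H.induce {w | c w = c v})) :
    ∃ idx : V → ℕ, ∀ v w, c v = c w →
      (H.Adj v w ↔ idx v + 1 = idx w ∨ idx w + 1 = idx v) ∧ (idx v = idx w → v = w) := by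
  have hclass : ∀ e, ∃ idx : V → ℕ, ∀ v w, c v = e → c w = e →
      (H.Adj v w ↔ idx v + 1 = idx w ∨ idx w + 1 = idx v) ∧ (idx v = idx w → v = w) := by
    intro e
    by_cases he : ∃ v, c v = e
    · obtain ⟨v₀, rfl⟩ := he
      obtain ⟨idx, hidx⟩ := (h v₀).exists_index
      exact ⟨idx, fun v w hv hw => hidx v hv w hw⟩
    · exact ⟨0, fun v _ hv => absurd ⟨v, hv⟩ he⟩
  choose idx hidx using hclass
  refine ⟨fun v => idx (c v) v, fun v w hvw => ?_⟩
  simp only [hvw]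
  exact hidx (c w) v w hvw rfl

section ChainParent

variable {ι Q κ : Type}

open Classical in
noncomputable def chainParent (c : Q → κ) (idx : Q → ℕ) (root : Q → ι) (q : Q) : ι ⊕ Q :=
  if h : ∃ p, c p = c q ∧ idx p + 1 = idx q then .inr h.choose else .inl (root q)

variable {c : Q → κ} {idx : Q → ℕ} {root : Q → ι}

lemma chainParent_eq_inr_iff (hinj : ∀ p p', c p = c p' → idx p = idx p' → p = p') {q p : Q} :
    chainParent c idx root q = .inr p ↔ c p = c q ∧ idx p + 1 = idx q := by
  unfold chainParent
  split_ifs with h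
  · obtain ⟨hc, hidx⟩ := h.choose_spec
    refine ⟨fun hp => Sum.inr_injective hp ▸ h.choose_spec, fun hp => ?_⟩
    exact congrArg Sum.inr (hinj _ _ (hc.trans hp.1.symm) (by omega))
  · exact ⟨nofun, fun hp => absurd ⟨p, hp⟩ h⟩

lemma chainParent_eq_inl {q : Q} {i : ι} (h : chainParent c idx root q = .inl i) :
    i = root q := by
  unfold chainParent at h
  split_ifs at h
  exact Sum.inl_injective h.symm

end ChainParent

lemma exists_parent_of_forall_isPathGraph {V κ ι : Type} {H : SimpleGraph V} (c : V → κ)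
    (h : ∀ v, IsPathGraph (H.induce {w | c w = c v})) (root : V → ι) :
    ∃ (ρ : V → ι ⊕ V) (rank : V → ℕ),
      (∀ q p, ρ q = .inr p → rank p < rank q) ∧ (∀ q p, ρ q = .inr p → c p = c q) ∧
      (∀ q i, ρ q = .inl i → i = root q) ∧
      ∀ q p, c q = c p → H.Adj q p → ρ q = .inr p ∨ ρ p = .inr q := by
  obtain ⟨idx, hidx⟩ := exists_index_of_forall_isPathGraph c h
  have hρ : ∀ q p, chainParent c idx root q = .inr p ↔ c p = c q ∧ idx p + 1 = idx q :=
    fun q p => chainParent_eq_inr_iff fun p p' hc => (hidx p p' hc).2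
  refine ⟨chainParent c idx root, idx, fun q p hqp => ?_, fun q p hqp => ((hρ q p).1 hqp).1,
    fun q i => chainParent_eq_inl, fun q p hc hqp => ?_⟩
  · have := ((hρ q p).1 hqp).2
    omega
  · rcases (hidx q p hc).1.1 hqp with h | h
    · exact .inr ((hρ p q).2 ⟨hc, h⟩)
    · exact .inl ((hρ q p).2 ⟨hc.symm, h⟩)

namespace SimpleGraph

variable {ι Q : Type}

def pendantGraph (T : SimpleGraph ι) (ρ : Q → ι ⊕ Q) : SimpleGraph (ι ⊕ Q) :=
  (T ⊕g ⊥) ⊔ fromRel fun x y : ι ⊕ Q => ∃ q, x = .inr q ∧ y = ρ q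

variable {T : SimpleGraph ι} {ρ : Q → ι ⊕ Q}

@[simp]
lemma pendantGraph_adj_inl_inl {i j : ι} :
    (pendantGraph T ρ).Adj (.inl i) (.inl j) ↔ T.Adj i j := by
  simp [pendantGraph]

lemma pendantGraph_adj_inr {q : Q} {y : ι ⊕ Q} :
    (pendantGraph T ρ).Adj (.inr q) y ↔
      y ≠ .inr q ∧ (y = ρ q ∨ ∃ p, y = .inr p ∧ ρ p = .inr q) := by
  cases y <;> simp [pendantGraph, eq_comm (a := Sum.inr q)]

def pendantGraph.inlEmbedding : T ↪g pendantGraph T ρ :=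
  ⟨Function.Embedding.inl, pendantGraph_adj_inl_inl⟩

variable {rank : Q → ℕ}

lemma pendantGraph_adj_parent (hrank : ∀ q p, ρ q = .inr p → rank p < rank q) (q : Q) :
    (pendantGraph T ρ).Adj (.inr q) (ρ q) :=
  pendantGraph_adj_inr.2 ⟨fun h => (hrank q q h).false, .inl rfl⟩

lemma pendantGraph_eq_parent_of_adj (hrank : ∀ q p, ρ q = .inr p → rank p < rank q)
    {q : Q} {y : ι ⊕ Q} (hy : (pendantGraph T ρ).Adj (.inr q) y)
    (hle : ∀ p, y = .inr p → rank p ≤ rank q) : y = ρ q := by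
  obtain ⟨-, hy | ⟨p, rfl, hp⟩⟩ := pendantGraph_adj_inr.1 hy
  · exact hy
  · exact absurd (hle p rfl) (hrank p q hp).not_ge

lemma isAcyclic_pendantGraph (hT : T.IsAcyclic)
    (hrank : ∀ q p, ρ q = .inr p → rank p < rank q) : (pendantGraph T ρ).IsAcyclic := by
  intro x c hc
  by_cases hQ : ∃ q, .inr q ∈ c.support
  · -- the pendant vertex of largest rank on `c` has only its parent as a neighbour on `c`
    have hfin : {q | .inr q ∈ c.support}.Finite :=
      c.support.finite_toSet.preimage Sum.inr_injective.injOn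
    obtain ⟨q, hq, hmax⟩ := hfin.exists_maximalFor rank _ hQ
    obtain ⟨y, z, hyz, hyz'⟩ := Set.ncard_eq_two.1 (hc.ncard_neighborSet_toSubgraph_eq_two hq)
    have hparent : ∀ y ∈ c.toSubgraph.neighborSet (.inr q), y = ρ q := by
      intro y hy
      refine pendantGraph_eq_parent_of_adj hrank (c.toSubgraph.adj_sub hy) ?_
      rintro p rfl
      by_contra! hlt
      exact hlt.not_ge (hmax (c.mem_verts_toSubgraph.1 hy.snd_mem) hlt.le)
    exact hyz ((hparent y (hyz' ▸ .inl rfl)).trans (hparent z (hyz' ▸ .inr rfl)).symm)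
  · have hsupp : ∀ x ∈ c.support, x ∈ Set.range Sum.inl := by
      rintro (i | q) hx
      · exact ⟨i, rfl⟩
      · exact absurd ⟨q, hx⟩ hQ
    have hc' : (c.induce _ hsupp).IsCycle := by
      rw [← c.map_induce hsupp] at hc
      exact (Walk.isCycle_map_iff_of_injective (RelEmbedding.injective _)).1 hc
    exact (pendantGraph.inlEmbedding.isoInduceRange.isAcyclic_iff.1 hT) _ hc'

lemma pendantGraph_induce_reachable_inl (hrank : ∀ q p, ρ q = .inr p → rank p < rank q)
    {S : Set (ι ⊕ Q)} (hS : ∀ q, .inr q ∈ S → ρ q ∈ S) (q : Q) (hq : .inr q ∈ S) :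
    ∃ i, ∃ hi : .inl i ∈ S,
      ((pendantGraph T ρ).induce S).Reachable ⟨.inr q, hq⟩ ⟨.inl i, hi⟩ := by
  induction hn : rank q using Nat.strong_induction_on generalizing q with
  | _ n ih =>
    obtain ⟨y, hyS, hy, hadj⟩ : ∃ y, ∃ hyS : y ∈ S, ρ q = y ∧
        ((pendantGraph T ρ).induce S).Adj ⟨.inr q, hq⟩ ⟨y, hyS⟩ :=
      ⟨_, hS q hq, rfl, pendantGraph_adj_parent hrank q⟩
    rcases y with i | p
    · exact ⟨i, hyS, hadj.reachable⟩
    · obtain ⟨i, hi, hreach⟩ := ih (rank p) (hn ▸ hrank q p hy) p hyS rfl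
      exact ⟨i, hi, hadj.reachable.trans hreach⟩

lemma pendantGraph_induce_connected (hrank : ∀ q p, ρ q = .inr p → rank p < rank q)
    {S : Set (ι ⊕ Q)} (hS : ∀ q, .inr q ∈ S → ρ q ∈ S)
    (hbase : (T.induce {i | .inl i ∈ S}).Connected) :
    ((pendantGraph T ρ).induce S).Connected := by
  have hinl : ∀ i j (hi : .inl i ∈ S) (hj : .inl j ∈ S),
      ((pendantGraph T ρ).induce S).Reachable ⟨.inl i, hi⟩ ⟨.inl j, hj⟩ := fun i j hi hj =>
    (hbase.preconnected ⟨i, hi⟩ ⟨j, hj⟩).map (G' := (pendantGraph T ρ).induce S)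
      ⟨fun i => ⟨.inl i.1, i.2⟩, fun h => pendantGraph_adj_inl_inl.2 h⟩
  obtain ⟨i₀, hi₀⟩ := hbase.nonempty
  rw [connected_iff_exists_forall_reachable]
  refine ⟨⟨.inl i₀, hi₀⟩, ?_⟩
  rintro ⟨i | q, hx⟩
  · exact hinl i₀ i hi₀ hx
  · obtain ⟨i, hi, hreach⟩ := pendantGraph_induce_reachable_inl hrank hS q hx
    exact (hinl i₀ i hi₀ hi).trans hreach.symm

lemma isTree_pendantGraph (hT : T.IsTree) (hrank : ∀ q p, ρ q = .inr p → rank p < rank q) :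
    (pendantGraph T ρ).IsTree :=
  ⟨(induceUnivIso _).connected_iff.1 <| pendantGraph_induce_connected hrank
      (fun _ _ => Set.mem_univ _) ((induceUnivIso T).connected_iff.2 hT.connected),
    isAcyclic_pendantGraph hT.isAcyclic hrank⟩

end SimpleGraph

section PendantBags

variable {β ι : Type} {R : Set β}

def pendantBags (B : ι → Set β) (A : ↥Rᶜ → Set β) (ρ : ↥Rᶜ → ι ⊕ ↥Rᶜ) : ι ⊕ ↥Rᶜ → Set β
  | .inl i => B i
  | .inr q => insert q.1 (A q ∪ Subtype.val '' {p | ρ q = .inr p})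

variable {B : ι → Set β} {A : ↥Rᶜ → Set β} {ρ : ↥Rᶜ → ι ⊕ ↥Rᶜ}

lemma exists_mem_pendantBags_of_adj {H : SimpleGraph β}
    (hbase : ∀ ⦃u v⦄, u ∈ R → v ∈ R → H.Adj u v → ∃ i, u ∈ B i ∧ v ∈ B i)
    (hattach : ∀ (q : ↥Rᶜ) ⦃v⦄, v ∈ R → H.Adj q v → v ∈ A q)
    (hchain : ∀ q p : ↥Rᶜ, H.Adj q p → ρ q = .inr p ∨ ρ p = .inr q)
    ⦃u v : β⦄ (huv : H.Adj u v) : ∃ x, u ∈ pendantBags B A ρ x ∧ v ∈ pendantBags B A ρ x := by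
  by_cases hu : u ∈ R <;> by_cases hv : v ∈ R
  · obtain ⟨i, hui, hvi⟩ := hbase hu hv huv
    exact ⟨.inl i, hui, hvi⟩
  · exact ⟨.inr ⟨v, hv⟩, .inr (.inl (hattach ⟨v, hv⟩ hu huv.symm)), .inl rfl⟩
  · exact ⟨.inr ⟨u, hu⟩, .inl rfl, .inr (.inl (hattach ⟨u, hu⟩ hv huv))⟩
  · rcases hchain ⟨u, hu⟩ ⟨v, hv⟩ huv with h | h
    · exact ⟨.inr ⟨u, hu⟩, .inl rfl, .inr (.inr ⟨_, h, rfl⟩)⟩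
    · exact ⟨.inr ⟨v, hv⟩, .inr (.inr ⟨_, h, rfl⟩), .inl rfl⟩

variable {T : SimpleGraph ι} {rank : ↥Rᶜ → ℕ}

lemma connected_induce_pendantBags (hrank : ∀ q p, ρ q = .inr p → rank p < rank q)
    (hB : ∀ i, B i ⊆ R) (hA : ∀ q, A q ⊆ R)
    (hroot : ∀ q i, ρ q = .inl i → A q ⊆ B i) (hpar : ∀ q p, ρ q = .inr p → A q ⊆ A p)
    (htrace : ∀ b ∈ R, (T.induce {i | b ∈ B i}).Connected) (b : β) :
    ((pendantGraph T ρ).induce {x | b ∈ pendantBags B A ρ x}).Connected := by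
  by_cases hb : b ∈ R
  · refine pendantGraph_induce_connected hrank (fun q hq => ?_) (htrace b hb)
    have hbA : b ∈ A q := by
      rcases hq with h | h | ⟨p, -, h⟩
      · exact absurd (h ▸ hb) q.2
      · exact h
      · exact absurd (h ▸ hb) p.2
    rcases hρ : ρ q with i | p
    · exact hroot q i hρ hbA
    · exact .inr (.inl (hpar q p hρ hbA))
  · -- the bags containing the pendant vertex `b` are its own and its children's: a star
    rw [connected_iff_exists_forall_reachable]
    refine ⟨⟨.inr ⟨b, hb⟩, .inl rfl⟩, ?_⟩
    rintro ⟨i | ⟨q, hq⟩, hx⟩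
    · exact absurd (hB i hx) hb
    · obtain rfl | h | ⟨p, hp, rfl⟩ := id hx
      · rfl
      · exact absurd (hA _ h) hb
      · have hadj := pendantGraph_adj_parent (T := T) hrank ⟨q, hq⟩
        rw [hp] at hadj
        exact (Adj.reachable (show ((pendantGraph T ρ).induce _).Adj ⟨_, hx⟩ ⟨.inr p, .inl rfl⟩
          from hadj)).symm

lemma finite_pendantBags_inr {q : ↥Rᶜ} (hA : (A q).Finite) :
    (pendantBags B A ρ (.inr q)).Finite := by
  refine (hA.union (Set.Subsingleton.finite ?_ |>.image _)).insert _
  exact fun p hp p' hp' => Sum.inr_injective (hp.symm.trans hp')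

lemma ncard_pendantBags_inr_le (q : ↥Rᶜ) :
    (pendantBags B A ρ (.inr q)).ncard ≤ (A q).ncard + 2 := by
  have hpar : (Subtype.val '' {p | ρ q = .inr p}).ncard ≤ 1 := by
    cases ρ q <;> simp
  have := Set.ncard_insert_le q.1 (A q ∪ Subtype.val '' {p | ρ q = .inr p})
  have := Set.ncard_union_le (A q) (Subtype.val '' {p | ρ q = .inr p})
  show (insert q.1 (A q ∪ Subtype.val '' {p | ρ q = .inr p})).ncard ≤ _
  omega

lemma hasTreewidthLE_of_pendantBags {H : SimpleGraph β} {k : ℕ} (hT : T.IsTree)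
    (hrank : ∀ q p, ρ q = .inr p → rank p < rank q)
    (hbase : ∀ ⦃u v⦄, u ∈ R → v ∈ R → H.Adj u v → ∃ i, u ∈ B i ∧ v ∈ B i)
    (hattach : ∀ (q : ↥Rᶜ) ⦃v⦄, v ∈ R → H.Adj q v → v ∈ A q)
    (hchain : ∀ q p : ↥Rᶜ, H.Adj q p → ρ q = .inr p ∨ ρ p = .inr q)
    (hB : ∀ i, B i ⊆ R) (hA : ∀ q, A q ⊆ R)
    (hroot : ∀ q i, ρ q = .inl i → A q ⊆ B i) (hpar : ∀ q p, ρ q = .inr p → A q ⊆ A p)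
    (htrace : ∀ b ∈ R, (T.induce {i | b ∈ B i}).Connected)
    (hBcard : ∀ i, (B i).Finite ∧ (B i).ncard ≤ k + 1)
    (hAcard : ∀ q, (A q).Finite ∧ (A q).ncard ≤ 2) : HasTreewidthLE H (max k 3) := by
  refine ⟨_, pendantGraph T ρ, pendantBags B A ρ, isTree_pendantGraph hT hrank,
    exists_mem_pendantBags_of_adj hbase hattach hchain,
    connected_induce_pendantBags hrank hB hA hroot hpar htrace, ?_⟩
  rintro (i | q)
  · exact ⟨(hBcard i).1, (hBcard i).2.trans (by omega)⟩
  · exact ⟨finite_pendantBags_inr (hAcard q).1,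
      (ncard_pendantBags_inr_le q).trans (by have := (hAcard q).2; omega)⟩

end PendantBags

lemma Sym2.finite_coe {α : Type} (z : Sym2 α) : (z : Set α).Finite := by
  induction z using Sym2.ind with
  | _ x y => simp

lemma Sym2.ncard_coe_le {α : Type} (z : Sym2 α) : (z : Set α).ncard ≤ 2 := by
  induction z using Sym2.ind with
  | _ x y => exact Sym2.coe_mk (x := x) (y := y) ▸ (Set.ncard_insert_le _ _).trans (by simp)

lemma exists_bag_of_mem_edgeSet {α ι : Type} {G : SimpleGraph α} {B : ι → Set α}
    (hcover : ∀ ⦃u v⦄, G.Adj u v → ∃ i, u ∈ B i ∧ v ∈ B i) {e : Sym2 α} (he : e ∈ G.edgeSet) :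
    ∃ i, (e : Set α) ⊆ B i := by
  induction e using Sym2.ind with
  | _ u v =>
    obtain ⟨i, hu, hv⟩ := hcover he
    exact ⟨i, by simp [Set.insert_subset_iff, hu, hv]⟩

theorem stmt14_general {α β : Type}
    (G : SimpleGraph α) (G' : SimpleGraph β) (h : IsDistension G G')
    (k : ℕ) (hk : HasTreewidthLE G k) : HasTreewidthLE G' (max k 3) := by
  obtain ⟨g, f, hg, hedge, hadj, hsame, hpaths⟩ := h
  obtain ⟨ι, T, B, hT, hcover, htrace, hbags⟩ := hk
  choose rt hrt using fun q : ↥(Set.range g)ᶜ => exists_bag_of_mem_edgeSet hcover (hedge q q.2)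
  obtain ⟨ρ, rank, hrank, hclass, hroot, hchain⟩ :=
    exists_parent_of_forall_isPathGraph (H := G'.induce (Set.range g)ᶜ) (fun q => f q)
      (fun q => (hpaths (f q) (hedge q q.2)).2.induce_induce) rt
  refine hasTreewidthLE_of_pendantBags (B := fun i => g '' B i)
    (A := fun q => g '' (f q : Set α)) hT hrank ?_ ?_
    (fun q p hqp => hchain q p (hsame q p q.2 p.2 hqp) hqp)
    (fun i => Set.image_subset_range _ _) (fun q => Set.image_subset_range _ _)
    (fun q i hqi => hroot q i hqi ▸ Set.image_mono (hrt q))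
    (fun q p hqp => (congrArg (fun e : Sym2 α => g '' (e : Set α)) (hclass q p hqp)).ge) ?_
    (fun i => ⟨(hbags i).1.image g, (Set.ncard_image_le (hbags i).1).trans (hbags i).2⟩)
    (fun q => ⟨(f q).finite_coe.image g, (Set.ncard_image_le (f q).finite_coe).trans
      (f q).ncard_coe_le⟩)
  · rintro _ _ ⟨a, rfl⟩ ⟨b, rfl⟩ hab
    obtain ⟨i, ha, hb⟩ := hcover ((hg a b).1 hab)
    exact ⟨i, ⟨a, ha, rfl⟩, ⟨b, hb, rfl⟩⟩
  · rintro q _ ⟨b, rfl⟩ hqb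
    exact ⟨b, (hadj q q.2 b).1 hqb, rfl⟩
  · rintro _ ⟨a, rfl⟩
    have hbags_a : {i | g a ∈ g '' B i} = {i | a ∈ B i} :=
      Set.ext fun i => g.injective.mem_set_image
    exact hbags_a ▸ htrace a

/-- For any graph `G` and any distension `G'` of `G`, `tw(G') ≤ max {tw(G), 3}`. -/
theorem stmt14 {α β : Type} [Fintype α] [Fintype β]
    (G : SimpleGraph α) (G' : SimpleGraph β) (h : IsDistension G G')
    (k : ℕ) (hk : HasTreewidthLE G k) : HasTreewidthLE G' (max k 3) :=
  stmt14_general G G' h k hk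
end
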